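/- Let D be even and s ∈ [0, D/2]. Any two vectors x, x' ∈ V(s) lie in the same connected component of the graph on V (where x ∼ y iff x + y = e_i, (x,e_i) = 0 for some i ∈ [1,D]). -/

import Mathlib

/-! Every vector of `V(s)` is connected to the packed representative
`e_{[m,m+1]} + e_{[m+4,m+5]} + ⋯` with `m ∈ {1, 2}`, `m ≡ s (mod 2)`. Flipping coordinate `i`
is an edge as soon as `x_{i-1} = x_{i+1}`, and two such flips extend an interval that is
isolated by zeros by two at either end. Going through the intervals from left to right, each
one is shrunk to length two and slid to the left in steps of two until it lies just beyond
its predecessor. -/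

/-- The bilinear form on `𝔽₂^D` determined by `(e_i, e_j) = 1` iff `|i - j| = 1`. -/
def bform (D : ℕ) (x y : Fin D → ZMod 2) : ZMod 2 :=
  ∑ a : Fin D, ∑ b : Fin D,
    if a.1 = b.1 + 1 ∨ b.1 = a.1 + 1 then x a * y b else 0

/-- The basis vector `e_i` of `𝔽₂^n` (1-based index `i`). -/
def basisVec (n i : ℕ) : Fin n → ZMod 2 := fun k => if k.1 + 1 = i then 1 else 0

/-- Adjacency in the graph on `V`. -/
def Adj (D : ℕ) (x x' : Fin D → ZMod 2) : Prop :=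
  ∃ i : ℕ, 1 ≤ i ∧ i ≤ D ∧ x + x' = basisVec D i ∧
    bform D x (basisVec D i) = 0 ∧ bform D x' (basisVec D i) = 0

/-- `p` and `q` are non-touching intervals. -/
def NonTouch (p q : ℕ × ℕ) : Prop := q.2 + 2 ≤ p.1 ∨ p.2 + 2 ≤ q.1

/-- The vector `e_I = ∑_{i ∈ I} e_i` of an interval `I = (a,b)` (1-based). -/
def eI (D : ℕ) (p : ℕ × ℕ) : Fin D → ZMod 2 :=
  fun k => if p.1 ≤ k.1 + 1 ∧ k.1 + 1 ≤ p.2 then 1 else 0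

/-- A list of intervals presenting an element of `V(s)`. -/
def VsList (D s : ℕ) (L : List (ℕ × ℕ)) : Prop :=
  L.length = (if s % 2 = 0 then s / 2 else (s + 1) / 2) ∧
    (∀ p ∈ L, 1 ≤ p.1 ∧ p.1 ≤ p.2 ∧ p.2 ≤ D) ∧
    L.Pairwise NonTouch ∧
    (∀ p ∈ L, p.1 % 2 = s % 2 ∧ p.2 % 2 = (s + 1) % 2)

/-- The 1-based coordinate `x_j`, read as `0` for `j ∉ [1, D]`, so that the neighbours of the
end points need no case split. -/
def coord (D j : ℕ) : (Fin D → ZMod 2) →+ ZMod 2 :=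
  if h : 1 ≤ j ∧ j ≤ D then Pi.evalAddMonoidHom _ ⟨j - 1, by omega⟩ else 0

lemma coord_apply (D j : ℕ) (x : Fin D → ZMod 2) :
    coord D j x = if h : 1 ≤ j ∧ j ≤ D then x ⟨j - 1, by omega⟩ else 0 := by
  unfold coord; split <;> rfl

lemma coord_basisVec (D i j : ℕ) :
    coord D j (basisVec D i) = if 1 ≤ j ∧ j ≤ D ∧ j = i then 1 else 0 := by
  rw [coord_apply]
  by_cases h : 1 ≤ j ∧ j ≤ D
  · simp only [dif_pos h, basisVec]
    split_ifs <;> first | rfl | omega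
  · rw [dif_neg h, if_neg (by omega)]

lemma coord_eI (D j : ℕ) (p : ℕ × ℕ) :
    coord D j (eI D p) = if 1 ≤ j ∧ j ≤ D ∧ p.1 ≤ j ∧ j ≤ p.2 then 1 else 0 := by
  rw [coord_apply]
  by_cases h : 1 ≤ j ∧ j ≤ D
  · simp only [dif_pos h, eI]
    split_ifs <;> first | rfl | omega
  · rw [dif_neg h, if_neg (by omega)]

lemma coord_sum_eI_eq_zero (D j : ℕ) (L : List (ℕ × ℕ))
    (h : ∀ p ∈ L, j < p.1 ∨ p.2 < j) :
    coord D j (L.map (eI D)).sum = 0 := by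
  rw [map_list_sum, List.map_map]
  refine List.sum_eq_zero fun c hc => ?_
  obtain ⟨p, hp, rfl⟩ := List.mem_map.mp hc
  simp only [Function.comp_apply, coord_eI]
  exact if_neg (by have := h p hp; omega)

lemma sum_ite_val_succ_eq_coord (D j : ℕ) (x : Fin D → ZMod 2) :
    (∑ a : Fin D, if a.1 + 1 = j then x a else 0) = coord D j x := by
  rw [coord_apply]
  by_cases h : 1 ≤ j ∧ j ≤ D
  · have hval : ∀ a : Fin D, a.1 + 1 = j ↔ a = ⟨j - 1, by omega⟩ := fun a => by
      simp only [Fin.ext_iff]; omega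
    simp only [hval, Finset.sum_ite_eq', Finset.mem_univ, if_true, dif_pos h]
  · rw [dif_neg h]
    exact Finset.sum_eq_zero fun a _ => if_neg (by omega)

lemma bform_basisVec (D i : ℕ) (x : Fin D → ZMod 2) (h1 : 1 ≤ i) (h2 : i ≤ D) :
    bform D x (basisVec D i) = coord D (i - 1) x + coord D (i + 1) x := by
  have hrow : ∀ a : Fin D,
      (∑ b : Fin D, if a.1 = b.1 + 1 ∨ b.1 = a.1 + 1 then x a * basisVec D i b else 0) =
        (if a.1 + 1 = i - 1 then x a else 0) + (if a.1 + 1 = i + 1 then x a else 0) := by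
    intro a
    rw [Finset.sum_eq_single_of_mem (⟨i - 1, by omega⟩ : Fin D) (Finset.mem_univ _)]
    · simp only [basisVec]
      split_ifs <;> first | omega | simp
    · intro b _ hb
      have hbv : basisVec D i b = 0 := if_neg fun hc => hb (Fin.ext (by simp only; omega))
      rw [hbv, mul_zero, ite_self]
  rw [bform, Finset.sum_congr rfl fun a _ => hrow a, Finset.sum_add_distrib,
    sum_ite_val_succ_eq_coord, sum_ite_val_succ_eq_coord]

instance Adj.instSymm (D : ℕ) : Std.Symm (Adj D) :=
  ⟨fun _ _ ⟨i, h1, h2, hsum, hx, hx'⟩ => ⟨i, h1, h2, by rwa [add_comm], hx', hx⟩⟩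

/-- `(x, e_i) = x_{i-1} + x_{i+1}`, and flipping `i` changes neither neighbour. -/
lemma adj_add_basisVec {D i : ℕ} {x : Fin D → ZMod 2} (h1 : 1 ≤ i) (h2 : i ≤ D)
    (h : coord D (i - 1) x = coord D (i + 1) x) : Adj D x (x + basisVec D i) := by
  have hsum : x + (x + basisVec D i) = basisVec D i := by
    funext k; rw [Pi.add_apply, Pi.add_apply, ← add_assoc, CharTwo.add_self_eq_zero, zero_add]
  refine ⟨i, h1, h2, hsum, ?_, ?_⟩
  · rw [bform_basisVec D i x h1 h2, h, CharTwo.add_self_eq_zero]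
  · rw [bform_basisVec D i _ h1 h2, map_add, map_add, coord_basisVec, coord_basisVec,
      if_neg (by omega), if_neg (by omega), add_zero, add_zero, h, CharTwo.add_self_eq_zero]

lemma eI_add_two_right (D : ℕ) {a b : ℕ} (h : a ≤ b + 1) :
    eI D (a, b + 2) = eI D (a, b) + basisVec D (b + 1) + basisVec D (b + 2) := by
  funext k
  simp only [eI, basisVec, Pi.add_apply]
  split_ifs <;> first | decide | omega

lemma eI_eq_add_two_left (D : ℕ) {a b : ℕ} (h : a + 1 ≤ b) :
    eI D (a, b) = eI D (a + 2, b) + basisVec D a + basisVec D (a + 1) := by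
  funext k
  simp only [eI, basisVec, Pi.add_apply]
  split_ifs <;> first | decide | omega

section IntervalMoves

variable {D : ℕ} {y : Fin D → ZMod 2}

/-- Flip `b + 2`, then `b + 1`. -/
lemma reach_extend_right {a b : ℕ} (hab : a ≤ b) (hb : 1 ≤ b) (hbD : b + 2 ≤ D)
    (hy : ∀ j, b ≤ j → j ≤ b + 3 → coord D j y = 0) :
    Relation.ReflTransGen (Adj D) (y + eI D (a, b)) (y + eI D (a, b + 2)) := by
  rw [eI_add_two_right D (by omega), show y + (eI D (a, b) + basisVec D (b + 1) +
    basisVec D (b + 2)) = y + eI D (a, b) + basisVec D (b + 2) + basisVec D (b + 1) by abel]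
  refine .tail (.single (adj_add_basisVec (by omega) hbD ?_))
    (adj_add_basisVec (by omega) (by omega) ?_)
  all_goals
    simp (disch := omega) only [map_add, coord_basisVec, coord_eI, hy, and_true, if_pos, if_neg]
      <;> decide

/-- Flip `a`, then `a + 1`. -/
lemma reach_extend_left {a b : ℕ} (ha : 1 ≤ a) (hab : a + 2 ≤ b) (haD : a + 2 ≤ D)
    (hy : ∀ j, a - 1 ≤ j → j ≤ a + 2 → coord D j y = 0) :
    Relation.ReflTransGen (Adj D) (y + eI D (a + 2, b)) (y + eI D (a, b)) := by
  rw [eI_eq_add_two_left D (a := a) (b := b) (by omega), ← add_assoc, ← add_assoc]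
  refine .tail (.single (adj_add_basisVec ha (by omega) ?_))
    (adj_add_basisVec (by omega) (by omega) ?_)
  all_goals
    simp (disch := omega) only [map_add, coord_basisVec, coord_eI, hy, if_pos, if_neg]
      <;> decide

/-- Shrink the interval from the right down to length two, then walk it to the left in steps
of two via `[a, a+1] → [a-2, a+1] → [a-2, a-1]`. -/
lemma reach_add_eI_shift_left {m : ℕ} (hm : 1 ≤ m) {a b : ℕ} (hma : m ≤ a) (hab : a < b)
    (hbD : b ≤ D) (ha : a % 2 = m % 2) (hb : b % 2 = (m + 1) % 2)
    (hy : ∀ j, m - 1 ≤ j → j ≤ b + 1 → coord D j y = 0) :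
    Relation.ReflTransGen (Adj D) (y + eI D (a, b)) (y + eI D (m, m + 1)) := by
  induction b using Nat.strong_induction_on generalizing a with
  | _ b ih =>
  by_cases hlong : a + 1 < b
  · obtain ⟨c, rfl⟩ : ∃ c, b = c + 2 := ⟨b - 2, by omega⟩
    have hshrink := symm (reach_extend_right (a := a) (b := c) (by omega) (by omega) hbD
      fun j h1 h2 => hy j (by omega) h2)
    exact hshrink.trans (ih c (by omega) hma (by omega) (by omega) ha (by omega)
      fun j h1 h2 => hy j h1 (by omega))
  obtain rfl : b = a + 1 := by omega
  by_cases hstart : a = m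
  · subst hstart; rfl
  obtain ⟨c, rfl⟩ : ∃ c, a = c + 2 := ⟨a - 2, by omega⟩
  have hstep : Relation.ReflTransGen (Adj D) (y + eI D (c + 2, c + 2 + 1))
      (y + eI D (c, c + 1)) :=
    (reach_extend_left (by omega) (by omega) (by omega)
      fun j h1 h2 => hy j (by omega) (by omega)).trans
      (symm (reach_extend_right (by omega) (by omega) (by omega)
        fun j h1 h2 => hy j (by omega) (by omega)))
  exact hstep.trans (ih (c + 1) (by omega) (by omega) (by omega) (by omega) (by omega) (by omega)
    fun j h1 h2 => hy j h1 (by omega))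

end IntervalMoves

def packedIntervals : ℕ → ℕ → List (ℕ × ℕ)
  | _, 0 => []
  | m, t + 1 => (m, m + 1) :: packedIntervals (m + 4) t

lemma reach_add_packedIntervals {D : ℕ} (L : List (ℕ × ℕ)) {m : ℕ} {y : Fin D → ZMod 2}
    (hm : 1 ≤ m) (hy : ∀ j, m - 1 ≤ j → coord D j y = 0)
    (hL : ∀ p ∈ L,
      m ≤ p.1 ∧ p.1 < p.2 ∧ p.2 ≤ D ∧ p.1 % 2 = m % 2 ∧ p.2 % 2 = (m + 1) % 2)
    (hsorted : L.Pairwise fun p q => p.2 + 2 ≤ q.1) :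
    Relation.ReflTransGen (Adj D) (y + (L.map (eI D)).sum)
      (y + ((packedIntervals m L.length).map (eI D)).sum) := by
  induction L generalizing m y with
  | nil => rfl
  | cons p L ih =>
    obtain ⟨hgap, hsorted⟩ := List.pairwise_cons.mp hsorted
    obtain ⟨hmp, hp, hpD, hp1, hp2⟩ := hL p List.mem_cons_self
    set S := (L.map (eI D)).sum
    have hyS : ∀ j, m - 1 ≤ j → j ≤ p.2 + 1 → coord D j (y + S) = 0 := fun j h1 h2 => by
      rw [map_add, hy j h1, coord_sum_eI_eq_zero D j L fun q hq => Or.inl (by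
        have := hgap q hq; omega), add_zero]
    have hhead : Relation.ReflTransGen (Adj D) (y + S + eI D p) (y + S + eI D (m, m + 1)) :=
      reach_add_eI_shift_left hm hmp hp hpD hp1 hp2 hyS
    have htail := ih (m := m + 4) (y := y + eI D (m, m + 1)) (by omega)
      (fun j hj => by
        rw [map_add, hy j (by omega), coord_eI, if_neg (by omega), add_zero])
      (fun q hq => by
        obtain ⟨h1, h2, h3, h4, h5⟩ := hL q (List.mem_cons_of_mem p hq)
        have := hgap q hq
        omega)
      hsorted
    rw [add_right_comm y (eI D (m, m + 1)) S] at htail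
    simp only [List.map_cons, List.sum_cons, List.length_cons, packedIntervals]
    convert hhead.trans htail using 1 <;> abel

/-- Sorting by left end point turns a non-touching family into a left-to-right one. -/
lemma exists_perm_pairwise_gap {L : List (ℕ × ℕ)} (hle : ∀ p ∈ L, p.1 ≤ p.2)
    (hL : L.Pairwise NonTouch) :
    ∃ L' : List (ℕ × ℕ), L'.Perm L ∧ L'.Pairwise fun p q => p.2 + 2 ≤ q.1 := by
  let r : ℕ × ℕ → ℕ × ℕ → Prop := fun p q => p.1 ≤ q.1
  have : Std.Total r := ⟨fun p q => Nat.le_total p.1 q.1⟩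
  have : IsTrans (ℕ × ℕ) r := ⟨fun _ _ _ => Nat.le_trans⟩
  have hperm := List.perm_insertionSort r L
  refine ⟨L.insertionSort r, hperm, ?_⟩
  refine ((hperm.pairwise_iff fun h => h.symm).mpr hL |>.and
    (List.pairwise_insertionSort r L)).imp_of_mem fun hp hq ⟨hpq, hle'⟩ => ?_
  have := hle _ (hperm.subset hq)
  unfold NonTouch at hpq
  omega

lemma VsList.reach_packedIntervals {D s : ℕ} {L : List (ℕ × ℕ)} (hL : VsList D s L) :
    Relation.ReflTransGen (Adj D) (L.map (eI D)).sum
      ((packedIntervals (2 - s % 2) L.length).map (eI D)).sum := by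
  obtain ⟨-, hbound, hnt, hpar⟩ := hL
  obtain ⟨L', hperm, hsorted⟩ := exists_perm_pairwise_gap (fun p hp => (hbound p hp).2.1) hnt
  have h := reach_add_packedIntervals (D := D) L' (m := 2 - s % 2) (y := 0) (by omega)
    (fun j _ => map_zero _)
    (fun p hp => by
      have := hbound p (hperm.subset hp)
      have := hpar p (hperm.subset hp)
      omega)
    hsorted
  rwa [zero_add, zero_add, (hperm.map _).sum_eq, hperm.length_eq] at h

theorem stmt_14_general (D s : ℕ)
    (L L' : List (ℕ × ℕ)) (hL : VsList D s L) (hL' : VsList D s L') :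
    Relation.ReflTransGen (Adj D) ((L.map (eI D)).sum) ((L'.map (eI D)).sum) := by
  have hlen : L'.length = L.length := by rw [hL.1, hL'.1]
  have h' := hL'.reach_packedIntervals
  rw [hlen] at h'
  exact hL.reach_packedIntervals.trans (symm h')

/-- For `D` even and `s ≤ D/2`, any two vectors of `V(s)` lie in the same connected
component of the graph on `V`. -/
theorem stmt_14 (D s : ℕ) (hD : Even D) (hs : s ≤ D / 2)
    (L L' : List (ℕ × ℕ)) (hL : VsList D s L) (hL' : VsList D s L') :
    Relation.ReflTransGen (Adj D) ((L.map (eI D)).sum) ((L'.map (eI D)).sum) :=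
  stmt_14_general D s L L' hL hL'
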